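/- Let v_f > 0, k_j > 0, 0 < v_c < v_f, k_c = (v_f - v_c)·k_j/v_f, and fix an average density K with k_j/2 < K ≤ (k_c + k_j)/2. Over the admissible set S_K = {(k1,k2) : 0 ≤ k1 ≤ k_j, 0 ≤ k2 ≤ k_j, k1 + k2 = 2K}, the cruising space-mean speed W(k1,k2) = (k1·G(k1) + k2·min{v_c, G(k2)})/(k1 + k2) attains its minimum value v_c - v_c·k_j/(2K), and this minimum is attained at (k1, k2) = (k_j, 2K - k_j), i.e., with bin 1 gridlocked at jam density. -/

import Mathlib

/-- Greenshields speed at density `k`, with free-flow speed `vf` and jam density `kj`. -/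
noncomputable def G (vf kj k : ℝ) : ℝ := vf * (1 - k / kj)

/-- Two-bin network space-mean speed where all vehicles in bin 2 cruise for parking
at desired cruising speed `vc` (worst case). -/
noncomputable def W (vf kj vc k1 k2 : ℝ) : ℝ :=
  (k1 * G vf kj k1 + k2 * min vc (G vf kj k2)) / (k1 + k2)

/-- Admissible two-bin configurations at network average density `K`. -/
def SK (kj K : ℝ) : Set (ℝ × ℝ) :=
  {p | 0 ≤ p.1 ∧ p.1 ≤ kj ∧ 0 ≤ p.2 ∧ p.2 ≤ kj ∧ p.1 + p.2 = 2 * K}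

/-
The flow `q(k) = k G(k) = (vf/kj) k (kj - k)` is a concave parabola vanishing at `0` and `kj`.
Hence `q(k₁) + q(k₂) ≥ q(k₁ + k₂ - kj) + q(kj) = q(2K - kj)`: pushing bin 1 to jam density and
bin 2 down to `2K - kj` only lowers the total flow. Below the critical density `2K - kj ≤ k_c`
the Greenshields speed is at least `vc`, so the total flow is at least `vc (2K - kj)`, which is
exactly the flow of the gridlocked configuration `(kj, 2K - kj)`. When instead bin 2 cruises at
`vc`, the bound is immediate from `k₁ G(k₁) ≥ 0 ≥ vc (k₁ - kj)`.
-/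

/-- The critical density `k_c`, at which the Greenshields speed drops to `vc`. -/
noncomputable def criticalDensity (vf kj vc : ℝ) : ℝ := (vf - vc) * kj / vf

lemma criticalDensity_le (vf kj vc : ℝ) (hvf : 0 < vf) (hkj : 0 ≤ kj) (hvc : 0 ≤ vc) :
    criticalDensity vf kj vc ≤ kj := by
  rw [criticalDensity, div_le_iff₀ hvf]
  nlinarith

lemma le_G_of_le_criticalDensity {vf kj vc k : ℝ} (hvf : 0 < vf) (hkj : 0 < kj)
    (hk : k ≤ criticalDensity vf kj vc) : vc ≤ G vf kj k := by
  rw [criticalDensity, le_div_iff₀ hvf] at hk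
  have : vf * k / kj ≤ vf - vc := by
    rw [div_le_iff₀ hkj]
    linarith
  rw [G, mul_one_sub, ← mul_div_assoc]
  linarith

lemma G_self (vf kj : ℝ) (hkj : kj ≠ 0) : G vf kj kj = 0 := by
  simp [G, div_self hkj]

lemma G_nonneg {vf kj k : ℝ} (hvf : 0 ≤ vf) (hkj : 0 < kj) (hk : k ≤ kj) : 0 ≤ G vf kj k :=
  mul_nonneg hvf (sub_nonneg.2 ((div_le_one hkj).2 hk))

lemma flow_add_flow_ge {vf kj k₁ k₂ : ℝ} (hvf : 0 ≤ vf) (hkj : 0 < kj)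
    (hk₁ : k₁ ≤ kj) (hk₂ : k₂ ≤ kj) :
    (k₁ + k₂ - kj) * G vf kj (k₁ + k₂ - kj) ≤ k₁ * G vf kj k₁ + k₂ * G vf kj k₂ := by
  have hdefect : k₁ * G vf kj k₁ + k₂ * G vf kj k₂ - (k₁ + k₂ - kj) * G vf kj (k₁ + k₂ - kj) =
      2 * (vf / kj) * ((kj - k₁) * (kj - k₂)) := by
    simp only [G]
    field_simp
    ring
  have : 0 ≤ 2 * (vf / kj) * ((kj - k₁) * (kj - k₂)) :=
    mul_nonneg (mul_nonneg zero_le_two (div_nonneg hvf hkj.le))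
      (mul_nonneg (sub_nonneg.2 hk₁) (sub_nonneg.2 hk₂))
  linarith

lemma vc_mul_le_cruising_flow {vf kj vc k₁ k₂ : ℝ} (hvf : 0 < vf) (hkj : 0 < kj) (hvc : 0 ≤ vc)
    (hk₁ : 0 ≤ k₁) (hk₁j : k₁ ≤ kj) (hk₂j : k₂ ≤ kj)
    (hjam : kj ≤ k₁ + k₂) (hcrit : k₁ + k₂ - kj ≤ criticalDensity vf kj vc) :
    vc * (k₁ + k₂ - kj) ≤ k₁ * G vf kj k₁ + k₂ * min vc (G vf kj k₂) := by
  rcases min_cases vc (G vf kj k₂) with ⟨hmin, -⟩ | ⟨hmin, -⟩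
  · have := mul_nonneg hk₁ (G_nonneg hvf.le hkj hk₁j)
    rw [hmin]
    nlinarith
  · have hG := le_G_of_le_criticalDensity hvf hkj hcrit
    rw [hmin]
    nlinarith [flow_add_flow_ge hvf.le hkj hk₁j hk₂j, mul_le_mul_of_nonneg_left hG (sub_nonneg.2 hjam)]

theorem cruising_lower_envelope_3_general (vf kj vc K : ℝ)
    (hvf : 0 < vf) (hkj : 0 < kj) (hvc0 : 0 < vc)
    (hK0 : kj / 2 < K) (hK : K ≤ ((vf - vc) * kj / vf + kj) / 2) :
    (∀ p ∈ SK kj K, vc - vc * kj / (2 * K) ≤ W vf kj vc p.1 p.2) ∧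
    ((kj, 2 * K - kj) ∈ SK kj K ∧
      W vf kj vc kj (2 * K - kj) = vc - vc * kj / (2 * K)) := by
  have hK2 : 0 < 2 * K := by linarith
  have hcrit : 2 * K - kj ≤ criticalDensity vf kj vc := by
    rw [criticalDensity]
    linarith
  have htarget : vc - vc * kj / (2 * K) = vc * (2 * K - kj) / (2 * K) := by
    rw [mul_sub, sub_div, mul_div_cancel_right₀ _ hK2.ne']
  refine ⟨?_, ?_, ?_⟩
  · rintro ⟨k₁, k₂⟩ ⟨hk₁, hk₁j, -, hk₂j, hsum⟩
    rw [htarget, W, hsum]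
    gcongr
    rw [← hsum]
    exact vc_mul_le_cruising_flow hvf hkj hvc0.le hk₁ hk₁j hk₂j (by linarith) (by linarith)
  · have := criticalDensity_le vf kj vc hvf hkj.le hvc0.le
    exact ⟨hkj.le, le_rfl, by linarith, by linarith, by ring⟩
  · rw [W, G_self vf kj hkj.ne', min_eq_left (le_G_of_le_criticalDensity hvf hkj hcrit), htarget]
    ring

/-- With cruising (worst case), for `kj/2 < K ≤ (kc + kj)/2`, the minimum of `W`
over `S_K` is `vc - vc kj / (2K)`, attained at `(kj, 2K - kj)` with bin 1
gridlocked at jam density. -/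
theorem cruising_lower_envelope_3 (vf kj vc K : ℝ)
    (hvf : 0 < vf) (hkj : 0 < kj) (hvc0 : 0 < vc) (hvcf : vc < vf)
    (hK0 : kj / 2 < K) (hK : K ≤ ((vf - vc) * kj / vf + kj) / 2) :
    (∀ p ∈ SK kj K, vc - vc * kj / (2 * K) ≤ W vf kj vc p.1 p.2) ∧
    ((kj, 2 * K - kj) ∈ SK kj K ∧
      W vf kj vc kj (2 * K - kj) = vc - vc * kj / (2 * K)) :=
  cruising_lower_envelope_3_general vf kj vc K hvf hkj hvc0 hK0 hK
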